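/- arXiv:1609.09310 — 3 statements merged into one kernel-verified Lean document; each statement's English description precedes it below -/
import Mathlib

section
/- Define J₀ : ℝ → ℝ by the everywhere-convergent series J₀(t) = ∑_{k=0}^∞ (-1)^k (t/2)^{2k} / (k!)². Then for every real x ≠ 0, lim_{β → +∞} [ J₀(2·e^{βx/2}) - 1 ] = -θ(x), where θ is the Heaviside step function; explicitly, the limit equals -1 when x > 0 and 0 when x < 0. -/
open Filter Real

/-- The Bessel function of the first kind of order zero, defined by its
everywhere-convergent power series `J₀(t) = ∑_{k≥0} (-1)^k (t/2)^{2k} / (k!)²`. -/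
noncomputable def besselJ0 (t : ℝ) : ℝ :=
  ∑' k : ℕ, (-1) ^ k * (t / 2) ^ (2 * k) / ((Nat.factorial k : ℝ)) ^ 2

/-!
Integrating the cosine series termwise against the Wallis integrals gives Poisson's formula
`J₀(t) = (2/π) ∫₀^{π/2} cos (t cos θ) dθ`. It shows that `J₀` is continuous with `J₀ 0 = 1`,
which settles `x < 0`, where the argument `2 e^{βx/2}` tends to `0`. The substitution `u = cos θ`
turns it into `(2/π) ∫₀¹ cos (t u) (1 - u²)^{-1/2} du`, the cosine transform of an integrable
function, so `J₀ t → 0` as `t → ∞` by the Riemann–Lebesgue lemma, which settles `x > 0`.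
-/

open MeasureTheory Set Topology
open scoped Nat

theorem prod_range_odd_div_even (n : ℕ) :
    ∏ i ∈ Finset.range n, (2 * (i : ℝ) + 1) / (2 * i + 2) = (2 * n)! / (4 ^ n * (n ! : ℝ) ^ 2) := by
  induction n with
  | zero => simp
  | succ n ih =>
    rw [Finset.prod_range_succ, ih, show 2 * (n + 1) = 2 * n + 1 + 1 by ring]
    simp only [Nat.factorial_succ]
    push_cast
    field_simp
    ring

theorem integral_cos_pow_two_mul (k : ℕ) :
    ∫ θ in 0..π / 2, cos θ ^ (2 * k) = π / 2 * ((2 * k)! / (4 ^ k * (k ! : ℝ) ^ 2)) := by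
  rw [EulerSine.integral_cos_pow_eq, integral_sin_pow_even, prod_range_odd_div_even]
  ring

theorem summable_pow_two_mul_div_factorial (x : ℝ) :
    Summable fun k : ℕ => x ^ (2 * k) / (2 * k)! :=
  (Real.summable_pow_div_factorial x).comp_injective fun _ _ h => by simpa using h

theorem besselJ0_eq_integral (t : ℝ) :
    besselJ0 t = 2 / π * ∫ θ in 0..π / 2, cos (t * cos θ) := by
  have hterm : ∀ k : ℕ, ∫ θ in 0..π / 2, (-1) ^ k * (t * cos θ) ^ (2 * k) / (2 * k)! =
      π / 2 * ((-1) ^ k * (t / 2) ^ (2 * k) / (k ! : ℝ) ^ 2) := by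
    intro k
    have hfactor : ∀ θ, (-1) ^ k * (t * cos θ) ^ (2 * k) / (2 * k)! =
        (-1) ^ k * t ^ (2 * k) / (2 * k)! * cos θ ^ (2 * k) := fun θ => by ring
    simp_rw [hfactor]
    rw [intervalIntegral.integral_const_mul, integral_cos_pow_two_mul, div_pow, pow_mul 2 2 k]
    field_simp
    norm_num
  have hsum : HasSum (fun k : ℕ => π / 2 * ((-1) ^ k * (t / 2) ^ (2 * k) / (k ! : ℝ) ^ 2))
      (∫ θ in 0..π / 2, cos (t * cos θ)) := by
    simp_rw [← hterm]
    refine intervalIntegral.hasSum_integral_of_dominated_convergence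
      (fun k _ => |t| ^ (2 * k) / (2 * k)!) (fun k => by fun_prop) (fun k => ?_)
      (.of_forall fun _ _ => summable_pow_two_mul_div_factorial |t|)
      intervalIntegrable_const (.of_forall fun θ _ => hasSum_cos (t * cos θ))
    refine .of_forall fun θ _ => ?_
    rw [norm_div, norm_mul, norm_pow, norm_pow, norm_neg, norm_one, one_pow, one_mul,
      Real.norm_natCast, Real.norm_eq_abs, abs_mul]
    gcongr
    exact mul_le_of_le_one_right (abs_nonneg t) (abs_cos_le_one θ)
  rw [besselJ0, ← hsum.tsum_eq, tsum_mul_left]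
  field_simp

theorem continuous_besselJ0 : Continuous besselJ0 := by
  simp_rw [funext besselJ0_eq_integral]
  fun_prop

theorem besselJ0_zero : besselJ0 0 = 1 := by
  simp [besselJ0_eq_integral]

theorem arccos_image_Ioo_zero_one : arccos '' Ioo 0 1 = Ioo 0 (π / 2) := by
  ext θ
  constructor
  · rintro ⟨u, ⟨hu₀, hu₁⟩, rfl⟩
    exact ⟨arccos_pos.2 hu₁, arccos_lt_pi_div_two.2 hu₀⟩
  · rintro ⟨hθ₀, hθ₁⟩
    have hθ : θ ∈ Icc 0 π := ⟨hθ₀.le, by linarith [pi_pos]⟩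
    refine ⟨cos θ, ⟨cos_pos_of_mem_Ioo ⟨by linarith, hθ₁⟩, ?_⟩, arccos_cos hθ.1 hθ.2⟩
    rw [← arccos_pos, arccos_cos hθ.1 hθ.2]
    exact hθ₀

theorem hasDerivWithinAt_arccos_Ioo_zero_one :
    ∀ u ∈ Ioo (0 : ℝ) 1, HasDerivWithinAt arccos (-(1 / √(1 - u ^ 2))) (Ioo 0 1) u :=
  fun _ hu => (hasDerivAt_arccos (by linarith [hu.1]) hu.2.ne).hasDerivWithinAt

theorem injOn_arccos_Ioo_zero_one : InjOn arccos (Ioo (0 : ℝ) 1) :=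
  arccos_injOn.mono fun _ hu => Ioo_subset_Icc_self ⟨by linarith [hu.1], hu.2⟩

theorem integrableOn_one_div_sqrt_one_sub_sq :
    IntegrableOn (fun u : ℝ => 1 / √(1 - u ^ 2)) (Ioo 0 1) := by
  have h := integrableOn_image_iff_integrableOn_abs_deriv_smul measurableSet_Ioo
    hasDerivWithinAt_arccos_Ioo_zero_one injOn_arccos_Ioo_zero_one (fun _ => (1 : ℝ))
  rw [arccos_image_Ioo_zero_one] at h
  simpa [abs_of_nonneg] using h.1 (integrableOn_const measure_Ioo_lt_top.ne)

theorem integral_cos_mul_cos_eq (t : ℝ) :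
    ∫ θ in 0..π / 2, cos (t * cos θ) = ∫ u in Ioo 0 1, cos (t * u) * (1 / √(1 - u ^ 2)) := by
  rw [intervalIntegral.integral_of_le (by positivity), integral_Ioc_eq_integral_Ioo,
    ← arccos_image_Ioo_zero_one, integral_image_eq_integral_abs_deriv_smul measurableSet_Ioo
      hasDerivWithinAt_arccos_Ioo_zero_one injOn_arccos_Ioo_zero_one]
  refine setIntegral_congr_fun measurableSet_Ioo fun u hu => ?_
  rw [smul_eq_mul, abs_neg, abs_of_nonneg (by positivity), cos_arccos (by linarith [hu.1]) hu.2.le,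
    mul_comm]

theorem re_fourierChar_smul_ofReal (x c : ℝ) :
    ((Real.fourierChar x : Circle) • (c : ℂ)).re = cos (2 * π * x) * c := by
  rw [Circle.smul_def, Real.fourierChar_apply, smul_eq_mul, Complex.re_mul_ofReal,
    Complex.exp_ofReal_mul_I_re]

theorem tendsto_integral_cos_mul_atTop {f : ℝ → ℝ} (hf : Integrable f) :
    Tendsto (fun t => ∫ u, cos (t * u) * f u) atTop (𝓝 0) := by
  have hre : ∀ w : ℝ, (∫ v, Real.fourierChar (-(v * w)) • (f v : ℂ)).re =
      ∫ v, cos (2 * π * (v * w)) * f v := by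
    intro w
    have hint : Integrable fun v => Real.fourierChar (-(v * w)) • (f v : ℂ) := by
      simpa [mul_comm] using (Real.fourierIntegral_convergent_iff w).2 hf.ofReal
    rw [← Complex.reCLM_apply, ← ContinuousLinearMap.integral_comp_comm _ hint]
    simp only [Complex.reCLM_apply, re_fourierChar_smul_ofReal, mul_neg, cos_neg]
  have hlim := (Complex.continuous_re.tendsto' 0 0 Complex.zero_re).comp
    (Real.tendsto_integral_exp_smul_cocompact fun v => (f v : ℂ))
  have hscale : Tendsto (fun t : ℝ => t / (2 * π)) atTop (cocompact ℝ) :=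
    (tendsto_id.atTop_div_const (by positivity)).mono_right
      (cocompact_eq_atBot_atTop (α := ℝ) ▸ le_sup_right)
  convert hlim.comp hscale using 2 with t
  simp only [Function.comp_apply, hre]
  congr! 3
  field_simp

theorem tendsto_setIntegral_cos_mul_atTop {f : ℝ → ℝ} {s : Set ℝ} (hs : MeasurableSet s)
    (hf : IntegrableOn f s) : Tendsto (fun t => ∫ u in s, cos (t * u) * f u) atTop (𝓝 0) := by
  convert tendsto_integral_cos_mul_atTop ((integrable_indicator_iff hs).2 hf) using 2 with t
  rw [← integral_indicator hs]
  simp_rw [indicator_mul_right]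

theorem tendsto_besselJ0_atTop : Tendsto besselJ0 atTop (𝓝 0) := by
  simpa [funext besselJ0_eq_integral, integral_cos_mul_cos_eq] using
    (tendsto_setIntegral_cos_mul_atTop measurableSet_Ioo
      integrableOn_one_div_sqrt_one_sub_sq).const_mul (2 / π)

/-- For every real `x ≠ 0`,
`lim_{β → +∞} [J₀(2 e^{βx/2}) - 1] = -θ(x)`: the limit is `-1` for `x > 0`
and `0` for `x < 0`. -/
theorem besselJ0_limit_heaviside (x : ℝ) :
    (0 < x → Tendsto (fun β : ℝ => besselJ0 (2 * Real.exp (β * x / 2)) - 1)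
      atTop (nhds (-1))) ∧
    (x < 0 → Tendsto (fun β : ℝ => besselJ0 (2 * Real.exp (β * x / 2)) - 1)
      atTop (nhds 0)) := by
  refine ⟨fun hx => ?_, fun hx => ?_⟩
  · have harg : Tendsto (fun β : ℝ => 2 * exp (β * x / 2)) atTop atTop :=
      (tendsto_exp_atTop.comp
        ((tendsto_id.atTop_mul_const hx).atTop_div_const two_pos)).const_mul_atTop two_pos
    simpa using (tendsto_besselJ0_atTop.comp harg).sub_const 1
  · have harg : Tendsto (fun β : ℝ => 2 * exp (β * x / 2)) atTop (𝓝 0) := by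
      simpa using (tendsto_exp_atBot.comp
        ((tendsto_id.atTop_mul_const_of_neg hx).atBot_div_const two_pos)).const_mul 2
    simpa [besselJ0_zero] using ((continuous_besselJ0.tendsto 0).comp harg).sub_const 1
end

section
/- Let f : [0, ∞) → ℝ be continuous with f(0) = 1, suppose there is a constant C > 0 with |f(x) - 1| ≤ C·x²/(1 + x²) for all x ≥ 0, and suppose the function g(x) = (f(x) - 1)/x² extends continuously to x = 0. Then lim_{N → ∞} √N · ( ∑_{E=1}^∞ E^{-2} · f(E/√N) - π²/6 ) = ∫_0^∞ (f(x) - 1) · x^{-2} dx, where the integral converges absolutely. -/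
/-!
Put `g x = (f x - 1) / x ^ 2`. With `s = √N`, the quantity `s (∑ E⁻² f(E/s) - ζ(2))` equals
`∑_{E ≥ 1} s⁻¹ g(E/s)`, a right-endpoint Riemann sum of `g` with mesh `1/s`, i.e. the integral over
`(0, ∞)` of the step function `x ↦ g (⌈s x⌉ / s)`. As `s → ∞` these step functions converge
pointwise to `g` by continuity on `(0, ∞)`, and they are dominated by `C / (1 + x²)` because that
bound is decreasing and `⌈s x⌉ / s ≥ x`; dominated convergence gives the limit.
-/

open Filter MeasureTheory Real Set Topology

theorem le_ceil_mul_div {s : ℝ} (hs : 0 < s) (x : ℝ) : x ≤ ⌈s * x⌉ / s := by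
  rw [le_div_iff₀ hs, mul_comm]
  exact Int.le_ceil _

theorem ceil_mul_div_lt {s : ℝ} (hs : 0 < s) (x : ℝ) : ⌈s * x⌉ / s < x + s⁻¹ := by
  rw [div_lt_iff₀ hs, add_mul, inv_mul_cancel₀ hs.ne', mul_comm]
  exact Int.ceil_lt_add_one _

theorem tendsto_ceil_mul_div_atTop (x : ℝ) :
    Tendsto (fun s : ℝ => (⌈s * x⌉ : ℝ) / s) atTop (𝓝 x) := by
  have hupper : Tendsto (fun s : ℝ => x + s⁻¹) atTop (𝓝 x) := by
    simpa using (tendsto_const_nhds (x := x)).add (tendsto_inv_atTop_zero (𝕜 := ℝ))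
  refine tendsto_of_tendsto_of_tendsto_of_le_of_le' tendsto_const_nhds hupper ?_ ?_ <;>
    filter_upwards [eventually_gt_atTop 0] with s hs
  exacts [le_ceil_mul_div hs x, (ceil_mul_div_lt hs x).le]

theorem iUnion_preimage_ceil_natCast_add_one :
    ⋃ n : ℕ, (Int.ceil : ℝ → ℤ) ⁻¹' {(n : ℤ) + 1} = Ioi 0 := by
  ext x
  simp only [mem_iUnion, mem_preimage, mem_singleton_iff, mem_Ioi]
  refine ⟨fun ⟨n, hn⟩ => Int.ceil_pos.mp (by omega), fun hx => ?_⟩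
  have := Int.ceil_pos.mpr hx
  exact ⟨(⌈x⌉ - 1).toNat, by omega⟩

section RiemannSum

variable {E : Type*} [NormedAddCommGroup E] {g : ℝ → E}

theorem aestronglyMeasurable_comp_ceil_mul_div (g : ℝ → E) (s : ℝ) (μ : Measure ℝ) :
    AEStronglyMeasurable (fun x => g (⌈s * x⌉ / s)) μ :=
  (StronglyMeasurable.of_discrete (f := fun k : ℤ => g (k / s))).comp_measurable
    (Int.measurable_ceil.comp (measurable_const_mul s)) |>.aestronglyMeasurable

theorem norm_comp_ceil_mul_div_le {b : ℝ → ℝ} (hb : AntitoneOn b (Ioi 0))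
    (hgb : ∀ y ∈ Ioi 0, ‖g y‖ ≤ b y) {s x : ℝ} (hs : 0 < s) (hx : 0 < x) :
    ‖g (⌈s * x⌉ / s)‖ ≤ b x :=
  have hxy := le_ceil_mul_div hs x
  (hgb _ (hx.trans_le hxy)).trans (hb hx (hx.trans_le hxy) hxy)

theorem integrableOn_comp_ceil_mul_div {b : ℝ → ℝ} (hb : AntitoneOn b (Ioi 0))
    (hgb : ∀ y ∈ Ioi 0, ‖g y‖ ≤ b y) (hbi : IntegrableOn b (Ioi 0)) {s : ℝ} (hs : 0 < s) :
    IntegrableOn (fun x => g (⌈s * x⌉ / s)) (Ioi 0) :=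
  hbi.mono' (aestronglyMeasurable_comp_ceil_mul_div g s _) <|
    (ae_restrict_mem measurableSet_Ioi).mono fun _ hx => norm_comp_ceil_mul_div_le hb hgb hs hx

variable [NormedSpace ℝ E]

theorem tendsto_integral_comp_ceil_mul_div {b : ℝ → ℝ} (hg : ContinuousOn g (Ioi 0))
    (hb : AntitoneOn b (Ioi 0)) (hgb : ∀ y ∈ Ioi 0, ‖g y‖ ≤ b y)
    (hbi : IntegrableOn b (Ioi 0)) :
    Tendsto (fun s => ∫ x in Ioi 0, g (⌈s * x⌉ / s)) atTop (𝓝 (∫ x in Ioi 0, g x)) := by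
  refine tendsto_integral_filter_of_dominated_convergence b
    (.of_forall fun s => aestronglyMeasurable_comp_ceil_mul_div g s _) ?_ hbi ?_
  · filter_upwards [eventually_gt_atTop 0] with s hs
    exact (ae_restrict_mem measurableSet_Ioi).mono fun _ hx => norm_comp_ceil_mul_div_le hb hgb hs hx
  · refine (ae_restrict_mem measurableSet_Ioi).mono fun x hx => ?_
    have hmem : ∀ᶠ s in atTop, (⌈s * x⌉ : ℝ) / s ∈ Ioi 0 :=
      (eventually_gt_atTop 0).mono fun s hs => (mem_Ioi.mp hx).trans_le (le_ceil_mul_div hs x)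
    exact (hg x hx).tendsto.comp (tendsto_nhdsWithin_iff.mpr ⟨tendsto_ceil_mul_div_atTop x, hmem⟩)

variable [CompleteSpace E]

theorem hasSum_integral_Ioi_comp_ceil {φ : ℤ → E}
    (hφ : IntegrableOn (fun x : ℝ => φ ⌈x⌉) (Ioi 0)) :
    HasSum (fun n : ℕ => φ (n + 1)) (∫ x in Ioi (0 : ℝ), φ ⌈x⌉) := by
  have hm (n : ℕ) : MeasurableSet ((Int.ceil : ℝ → ℤ) ⁻¹' {(n : ℤ) + 1}) :=
    (measurableSet_singleton _).preimage Int.measurable_ceil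
  have hpiece (n : ℕ) :
      ∫ x in (Int.ceil : ℝ → ℤ) ⁻¹' {(n : ℤ) + 1}, φ ⌈x⌉ = φ (n + 1) := by
    rw [setIntegral_congr_fun (hm n) (fun x hx => congrArg φ hx), setIntegral_const,
      Int.preimage_ceil_singleton]
    simp
  rw [← iUnion_preimage_ceil_natCast_add_one] at hφ ⊢
  simpa only [hpiece] using hasSum_integral_iUnion hm
    (fun m n hmn => Disjoint.preimage _ (by simpa using hmn)) hφ

theorem hasSum_integral_Ioi_comp_ceil_mul_div {s : ℝ} (hs : 0 < s)
    (hg : IntegrableOn (fun x => g (⌈s * x⌉ / s)) (Ioi 0)) :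
    HasSum (fun n : ℕ => s⁻¹ • g ((n + 1) / s)) (∫ x in Ioi 0, g (⌈s * x⌉ / s)) := by
  rw [integrableOn_Ioi_comp_mul_left_iff (fun y => g (⌈y⌉ / s)) 0 hs, mul_zero] at hg
  rw [integral_comp_mul_left_Ioi (fun y => g (⌈y⌉ / s)) 0 hs, mul_zero]
  simpa using (hasSum_integral_Ioi_comp_ceil (φ := fun k => g (k / s)) hg).const_smul s⁻¹

variable {b : ℝ → ℝ}

theorem hasSum_smul_comp_div {s : ℝ} (hs : 0 < s) (hb : AntitoneOn b (Ioi 0))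
    (hgb : ∀ y ∈ Ioi 0, ‖g y‖ ≤ b y) (hbi : IntegrableOn b (Ioi 0)) :
    HasSum (fun n : ℕ => s⁻¹ • g ((n + 1) / s)) (∫ x in Ioi 0, g (⌈s * x⌉ / s)) :=
  hasSum_integral_Ioi_comp_ceil_mul_div hs (integrableOn_comp_ceil_mul_div hb hgb hbi hs)

theorem tendsto_tsum_smul_comp_div_atTop (hg : ContinuousOn g (Ioi 0))
    (hb : AntitoneOn b (Ioi 0)) (hgb : ∀ y ∈ Ioi 0, ‖g y‖ ≤ b y)
    (hbi : IntegrableOn b (Ioi 0)) :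
    Tendsto (fun s => ∑' n : ℕ, s⁻¹ • g ((n + 1) / s)) atTop (𝓝 (∫ x in Ioi 0, g x)) :=
  (tendsto_integral_comp_ceil_mul_div hg hb hgb hbi).congr' <|
    (eventually_gt_atTop 0).mono fun _ hs => (hasSum_smul_comp_div hs hb hgb hbi).tsum_eq.symm

end RiemannSum

theorem hasSum_one_div_nat_add_one_sq :
    HasSum (fun n : ℕ => 1 / ((n : ℝ) + 1) ^ 2) (π ^ 2 / 6) := by
  simpa using (hasSum_nat_add_iff' 1).mpr hasSum_zeta_two

theorem antitoneOn_div_one_add_sq {C : ℝ} (hC : 0 ≤ C) :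
    AntitoneOn (fun y : ℝ => C / (1 + y ^ 2)) (Ioi 0) := fun x hx y _ hxy => by
  have : x ^ 2 ≤ y ^ 2 := pow_le_pow_left₀ (le_of_lt hx) hxy 2
  dsimp only
  gcongr

theorem integrableOn_div_one_add_sq (C : ℝ) :
    IntegrableOn (fun y : ℝ => C / (1 + y ^ 2)) (Ioi 0) := by
  simpa only [div_eq_mul_inv] using (integrable_inv_one_add_sq.const_mul C).integrableOn

theorem abs_div_sq_le_of_abs_le {a y C : ℝ} (hy : y ≠ 0) (ha : |a| ≤ C * y ^ 2 / (1 + y ^ 2)) :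
    |a / y ^ 2| ≤ C / (1 + y ^ 2) := by
  have hy2 : 0 < y ^ 2 := by positivity
  rw [abs_div, abs_of_pos hy2, div_le_iff₀ hy2]
  rwa [mul_comm, ← mul_div_assoc, mul_comm]

theorem regularized_sum_asymptotics_general (f : ℝ → ℝ)
    (hcont : ContinuousOn f (Set.Ici 0))
    (hC : ∃ C : ℝ, 0 < C ∧ ∀ x : ℝ, 0 ≤ x → |f x - 1| ≤ C * x ^ 2 / (1 + x ^ 2)) :
    IntegrableOn (fun x : ℝ => (f x - 1) / x ^ 2) (Set.Ioi 0) ∧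
    Tendsto (fun N : ℝ =>
        Real.sqrt N *
          ((∑' E : ℕ, f (((E:ℝ) + 1) / Real.sqrt N) / ((E:ℝ) + 1) ^ 2) - π ^ 2 / 6))
      atTop (nhds (∫ x in Set.Ioi (0:ℝ), (f x - 1) / x ^ 2)) := by
  obtain ⟨C, hC0, hCf⟩ := hC
  set g : ℝ → ℝ := fun x => (f x - 1) / x ^ 2 with hg
  have hgc : ContinuousOn g (Ioi 0) :=
    ((hcont.mono Ioi_subset_Ici_self).sub continuousOn_const).div (continuousOn_pow 2)
      fun x hx => pow_ne_zero 2 (ne_of_gt hx)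
  have hgb : ∀ y ∈ Ioi 0, ‖g y‖ ≤ C / (1 + y ^ 2) := fun y hy =>
    abs_div_sq_le_of_abs_le (ne_of_gt hy) (hCf y (le_of_lt hy))
  have hb := antitoneOn_div_one_add_sq hC0.le
  have hbi := integrableOn_div_one_add_sq C
  refine ⟨hbi.mono' (hgc.aestronglyMeasurable measurableSet_Ioi)
    ((ae_restrict_mem measurableSet_Ioi).mono hgb), ?_⟩
  refine ((tendsto_tsum_smul_comp_div_atTop hgc hb hgb hbi).comp tendsto_sqrt_atTop).congr' ?_
  filter_upwards [eventually_gt_atTop 0] with N hN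
  have hs : 0 < √N := sqrt_pos.mpr hN
  have hterm (n : ℕ) : f ((n + 1) / √N) / ((n : ℝ) + 1) ^ 2 =
      (√N)⁻¹ * ((√N)⁻¹ • g ((n + 1) / √N)) + 1 / ((n : ℝ) + 1) ^ 2 := by
    rw [hg, smul_eq_mul]
    field_simp
    ring
  have hsum := ((hasSum_smul_comp_div hs hb hgb hbi).summable).mul_left (√N)⁻¹
  simp only [Function.comp_apply, hterm, hsum.tsum_add hasSum_one_div_nat_add_one_sq.summable,
    tsum_mul_left, hasSum_one_div_nat_add_one_sq.tsum_eq]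
  field_simp
  ring

/-- Let `f : [0,∞) → ℝ` be continuous with `f(0) = 1`, suppose
`|f(x) - 1| ≤ C x²/(1 + x²)` for some `C > 0` and all `x ≥ 0`, and suppose
`g(x) = (f(x) - 1)/x²` extends continuously to `x = 0`. Then
`lim_{N → ∞} √N (∑_{E≥1} E⁻² f(E/√N) - π²/6) = ∫_0^∞ (f(x) - 1) x⁻² dx`,
the integral converging absolutely. -/
theorem regularized_sum_asymptotics (f : ℝ → ℝ)
    (hcont : ContinuousOn f (Set.Ici 0)) (hf0 : f 0 = 1)
    (hC : ∃ C : ℝ, 0 < C ∧ ∀ x : ℝ, 0 ≤ x → |f x - 1| ≤ C * x ^ 2 / (1 + x ^ 2))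
    (hext : ∃ L : ℝ, Tendsto (fun x : ℝ => (f x - 1) / x ^ 2)
      (nhdsWithin 0 (Set.Ioi 0)) (nhds L)) :
    IntegrableOn (fun x : ℝ => (f x - 1) / x ^ 2) (Set.Ioi 0) ∧
    Tendsto (fun N : ℝ =>
        Real.sqrt N *
          ((∑' E : ℕ, f (((E:ℝ) + 1) / Real.sqrt N) / ((E:ℝ) + 1) ^ 2) - π ^ 2 / 6))
      atTop (nhds (∫ x in Set.Ioi (0:ℝ), (f x - 1) / x ^ 2)) :=
  regularized_sum_asymptotics_general f hcont hC
end

section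
/- Let g be a finite simple graph with V vertices and let N ≥ V. Then the number of subgraphs of the complete graph K_N on N vertices that are isomorphic to g equals N! / ((N - V)! · |Aut(g)|), where Aut(g) is the automorphism group of g. -/
/-!
An injection `Fin V ↪ Fin N` is the same as a labelled copy of `g` in `K_N`, and there are
`N! / (N - V)!` of them. Sending a labelled copy to its image subgraph `H`, the copies with image
`H` correspond to the isomorphisms `g ≃ H`, which form an `Aut(g)`-torsor. Hence the number of
labelled copies is the number of subgraphs isomorphic to `g` times `|Aut(g)|`.
-/

namespace SimpleGraph

variable {α β : Type*} {A : SimpleGraph α} {B : SimpleGraph β}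

lemma Subgraph.toSubgraph_coeCopy_comp (B' : B.Subgraph) (e : A ≃g B'.coe) :
    (B'.coeCopy.comp e.toCopy).toSubgraph = B' := by
  simp [Copy.toSubgraph, Subgraph.coeCopy, Copy.comp, Subgraph.map_comp]

noncomputable def Subgraph.isoEquivFiberToSubgraph (B' : B.Subgraph) :
    (A ≃g B'.coe) ≃ {f : Copy A B // f.toSubgraph = B'} :=
  Equiv.ofBijective (fun e ↦ ⟨B'.coeCopy.comp e.toCopy, B'.toSubgraph_coeCopy_comp e⟩) <| by
    constructor
    · intro e e' h
      ext a
      exact congrArg (· a) (congrArg Subtype.val h)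
    · rintro ⟨f, rfl⟩
      exact ⟨f.isoToSubgraph, rfl⟩

noncomputable def Copy.equivSigmaIso :
    Copy A B ≃ Σ B' : {B' : B.Subgraph // Nonempty (B'.coe ≃g A)}, (A ≃g B'.1.coe) :=
  (Equiv.sigmaFiberEquiv fun f : Copy A B ↦
      (⟨f.toSubgraph, ⟨f.isoToSubgraph.symm⟩⟩ :
        {B' : B.Subgraph // Nonempty (B'.coe ≃g A)})).symm.trans <|
    Equiv.sigmaCongrRight fun B' ↦
      (Equiv.subtypeEquivRight fun _ ↦ Subtype.ext_iff).trans
        B'.1.isoEquivFiberToSubgraph.symm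

theorem natCard_copy_eq_natCard_subgraph_mul_natCard_aut :
    Nat.card (Copy A B) =
      Nat.card {B' : B.Subgraph // Nonempty (B'.coe ≃g A)} * Nat.card (A ≃g A) := by
  rw [Nat.card_congr Copy.equivSigmaIso, ← Nat.card_prod]
  exact Nat.card_congr <| (Equiv.sigmaCongrRight fun B' ↦
    RelIso.relIsoCongr (RelIso.refl _) B'.2.some).trans (Equiv.sigmaEquivProd _ _)

def Copy.topEquivEmbedding : Copy A (⊤ : SimpleGraph β) ≃ (α ↪ β) where
  toFun f := f.toEmbedding
  invFun f := ⟨⟨f, fun h ↦ f.injective.ne h.ne⟩, f.injective⟩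
  left_inv _ := rfl
  right_inv _ := rfl

end SimpleGraph

open SimpleGraph

/-- Let `g` be a finite simple graph on `V` vertices and `N ≥ V`.
The number of subgraphs of the complete graph `K_N` isomorphic to `g` equals
`N! / ((N - V)! · |Aut(g)|)`. -/
theorem card_subgraphs_isomorphic_to (V N : ℕ) (hVN : V ≤ N)
    (g : SimpleGraph (Fin V)) :
    Nat.card {H : (⊤ : SimpleGraph (Fin N)).Subgraph // Nonempty (H.coe ≃g g)} =
      N.factorial / ((N - V).factorial * Nat.card (g ≃g g)) := by
  have hcount : Nat.card {H : (⊤ : SimpleGraph (Fin N)).Subgraph // Nonempty (H.coe ≃g g)} *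
      Nat.card (g ≃g g) = N.descFactorial V := by
    rw [← natCard_copy_eq_natCard_subgraph_mul_natCard_aut, Nat.card_congr Copy.topEquivEmbedding,
      Nat.card_eq_fintype_card, Fintype.card_embedding_eq, Fintype.card_fin, Fintype.card_fin]
  have : Finite (g ≃g g) := .of_injective _ DFunLike.coe_injective
  rw [← Nat.factorial_mul_descFactorial hVN, ← hcount]
  exact (Nat.div_eq_of_eq_mul_left (Nat.mul_pos (Nat.factorial_pos _) Nat.card_pos)
    (by ring)).symm
end
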